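/- arXiv:2603.20135 — 3 statements merged into one kernel-verified Lean document; each statement's English description precedes it below -/
import Mathlib

section
/- Let (M_n^{(k)})_{n≥k}, for k = 1, 2, ..., be a family of processes such that each (M_n^{(k)}) is a nonnegative supermartingale under a measure P_∞ with M_k^{(k)} ≤ 1 (each starting at time k). Define M_n = max_{1≤k≤n} M_n^{(k)} and τ = inf{n ≥ 1 : M_n ≥ 1/α}. Then the average run length under P_∞ satisfies E_∞[τ] ≥ 1/α. -/
/-! The Shiryaev–Roberts statistic `R n = ∑_{k ≤ n} M k n` dominates every `M k n`, and `R n - n`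
is a supermartingale: the old summands are supermartingales and the new summand `M (n+1) (n+1)`
has conditional mean at most `1`. Optional stopping at the first time `σ` that `R` reaches `1/α`,
truncated at `n`, gives `(1/α) P(σ ≤ n) ≤ E[R_{σ ∧ n}] ≤ E[σ ∧ n] ≤ E[τ]`. Letting `n → ∞` yields
`E[τ] ≥ 1/α`, unless `σ = ∞` with positive probability, and then `E[τ] = ∞`. -/

open MeasureTheory ENNReal

section HittingTime

variable {ι Ω β : Type*} [ConditionallyCompleteLinearOrder ι] [WellFoundedLT ι]
  {u : ι → Ω → β} {s : Set β}

lemma hittingBtwn_le_hittingAfter (n m : ι) (ω : Ω) :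
    ((hittingBtwn u s n m ω : ι) : WithTop ι) ≤ hittingAfter u s n ω := by
  cases h : hittingAfter u s n ω with
  | top => exact le_top
  | coe j =>
    have hj : u j ω ∈ s := by
      simpa [h] using
        hittingAfter_mem_set_of_ne_top (u := u) (s := s) (n := n) (ω := ω) (by simp [h])
    have hnj : n ≤ j := by simpa [h] using le_hittingAfter (u := u) (s := s) (n := n) ω
    rcases le_total j m with hjm | hmj
    · exact_mod_cast hittingBtwn_le_of_mem hnj hjm hj
    · exact_mod_cast (hittingBtwn_le ω).trans hmj

end HittingTime

section Detection

variable {Ω : Type*} {m : MeasurableSpace Ω} {μ : Measure Ω} {F : Filtration ℕ m}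
  {G : ℕ → Ω → ℝ}

lemma adapted_of_supermartingale_sub (hG : Supermartingale (fun n ω => G n ω - n) F μ) :
    Adapted F G := fun n => by
  convert (hG.stronglyMeasurable n).measurable.add_const (n : ℝ) using 1
  ext ω; simp

lemma integrable_of_supermartingale_sub [IsFiniteMeasure μ]
    (hG : Supermartingale (fun n ω => G n ω - n) F μ) (n : ℕ) : Integrable (G n) μ :=
  ((hG.integrable n).add (integrable_const (n : ℝ))).congr (ae_of_all _ fun ω => by simp)

lemma integrable_natCast_of_isStoppingTime [IsFiniteMeasure μ] {σ : Ω → ℕ}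
    (hσ : IsStoppingTime F fun ω => (σ ω : ℕ∞)) {N : ℕ} (hσN : ∀ ω, σ ω ≤ N) :
    Integrable (fun ω => (σ ω : ℝ)) μ :=
  integrable_stoppedValue ℕ hσ (u := fun n (_ : Ω) => (n : ℝ)) (fun _ => integrable_const _)
    fun ω => WithTop.coe_le_coe.mpr (hσN ω)

lemma integral_stoppedValue_le_integral_stoppingTime [IsFiniteMeasure μ]
    (hG : Supermartingale (fun n ω => G n ω - n) F μ) (hG0 : ∀ ω, G 0 ω = 0)
    {σ : Ω → ℕ} (hσ : IsStoppingTime F fun ω => (σ ω : ℕ∞)) {N : ℕ} (hσN : ∀ ω, σ ω ≤ N) :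
    ∫ ω, stoppedValue G (fun ω => (σ ω : ℕ∞)) ω ∂μ ≤ ∫ ω, (σ ω : ℝ) ∂μ := by
  have hbdd : ∀ ω, (σ ω : ℕ∞) ≤ N := fun ω => WithTop.coe_le_coe.mpr (hσN ω)
  have hOS := hG.neg.expected_stoppedValue_mono (isStoppingTime_const F 0) hσ
    (fun ω => WithTop.coe_le_coe.mpr (Nat.zero_le (σ ω))) hbdd
  have hstop : stoppedValue (-fun n ω => G n ω - n) (fun ω => (σ ω : ℕ∞))
      = fun ω => (σ ω : ℝ) - stoppedValue G (fun ω => (σ ω : ℕ∞)) ω := by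
    ext ω; simp [stoppedValue]
  rw [stoppedValue_const, hstop, integral_sub (integrable_natCast_of_isStoppingTime hσ hσN)
    (integrable_stoppedValue ℕ hσ (integrable_of_supermartingale_sub hG) hbdd)] at hOS
  simpa [hG0] using hOS

lemma ofReal_mul_measure_hittingAfter_le_le_lintegral_hittingBtwn [IsFiniteMeasure μ]
    (hG : Supermartingale (fun n ω => G n ω - n) F μ) (hG0 : ∀ ω, G 0 ω = 0)
    (hGnn : ∀ n ω, 0 ≤ G n ω) (β : ℝ) (n : ℕ) :
    ENNReal.ofReal β * μ {ω | hittingAfter G (Set.Ici β) 0 ω ≤ n}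
      ≤ ∫⁻ ω, ((hittingBtwn G (Set.Ici β) 0 n ω : ℕ) : ℝ≥0∞) ∂μ := by
  set σ := hittingBtwn G (Set.Ici β) 0 n
  set S := {ω | hittingAfter G (Set.Ici β) 0 ω ≤ n}
  have hadapt := adapted_of_supermartingale_sub hG
  have hσ : IsStoppingTime F fun ω => (σ ω : ℕ∞) :=
    hadapt.isStoppingTime_hittingBtwn measurableSet_Ici
  have hS : MeasurableSet S := F.le n _ (hadapt.isStoppingTime_hittingAfter measurableSet_Ici n)
  have hlow : S.indicator (fun _ => β) ≤ stoppedValue G fun ω => (σ ω : ℕ∞) := by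
    intro ω
    by_cases hω : ω ∈ S
    · rw [Set.indicator_of_mem hω]
      exact stoppedValue_hittingBtwn_mem (hittingAfter_le_iff.mp hω)
    · rw [Set.indicator_of_notMem hω]
      exact hGnn _ ω
  have hreal : β * μ.real S ≤ ∫ ω, (σ ω : ℝ) ∂μ :=
    calc β * μ.real S = ∫ ω, S.indicator (fun _ => β) ω ∂μ := by
          rw [integral_indicator_const _ hS, smul_eq_mul, mul_comm]
      _ ≤ ∫ ω, stoppedValue G (fun ω => (σ ω : ℕ∞)) ω ∂μ :=
          integral_mono ((integrable_const β).indicator hS)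
            (integrable_stoppedValue ℕ hσ (integrable_of_supermartingale_sub hG)
              (fun ω => WithTop.coe_le_coe.mpr (hittingBtwn_le ω))) hlow
      _ ≤ ∫ ω, (σ ω : ℝ) ∂μ :=
          integral_stoppedValue_le_integral_stoppingTime hG hG0 hσ (fun ω => hittingBtwn_le ω)
  calc ENNReal.ofReal β * μ S = ENNReal.ofReal (β * μ.real S) := by
        rw [ENNReal.ofReal_mul' measureReal_nonneg, ofReal_measureReal]
    _ ≤ ENNReal.ofReal (∫ ω, (σ ω : ℝ) ∂μ) := ENNReal.ofReal_le_ofReal hreal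
    _ = ∫⁻ ω, (σ ω : ℝ≥0∞) ∂μ := by
        rw [ofReal_integral_eq_lintegral_ofReal
          (integrable_natCast_of_isStoppingTime hσ hittingBtwn_le)
          (ae_of_all _ fun ω => Nat.cast_nonneg _)]
        simp

theorem ofReal_le_lintegral_hittingAfter [IsProbabilityMeasure μ]
    (hG : Supermartingale (fun n ω => G n ω - n) F μ) (hG0 : ∀ ω, G 0 ω = 0)
    (hGnn : ∀ n ω, 0 ≤ G n ω) (β : ℝ) :
    ENNReal.ofReal β ≤ ∫⁻ ω, ENat.toENNReal (hittingAfter G (Set.Ici β) 0 ω) ∂μ := by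
  set T := hittingAfter G (Set.Ici β) 0
  have hT : IsStoppingTime F T :=
    (adapted_of_supermartingale_sub hG).isStoppingTime_hittingAfter measurableSet_Ici
  have hbound : ∀ n : ℕ, ENNReal.ofReal β * μ {ω | T ω ≤ n} ≤ ∫⁻ ω, ENat.toENNReal (T ω) ∂μ :=
    fun n => (ofReal_mul_measure_hittingAfter_le_le_lintegral_hittingBtwn hG hG0 hGnn β n).trans
      (lintegral_mono fun ω => by
        rw [← ENat.toENNReal_coe]
        exact ENat.toENNReal_le.mpr (hittingBtwn_le_hittingAfter 0 n ω))
  by_cases htop : μ {ω | T ω = ⊤} = 0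
  · have hmono : Monotone fun n : ℕ => {ω | T ω ≤ n} :=
      fun a b hab ω (h : T ω ≤ a) => h.trans (mod_cast hab)
    have hfin : μ (⋃ n : ℕ, {ω | T ω ≤ n}) = 1 := by
      refine (prob_compl_eq_zero_iff (MeasurableSet.iUnion fun n => F.le n _ (hT n))).mp ?_
      convert htop using 2
      ext ω
      simp only [Set.mem_compl_iff, Set.mem_iUnion, Set.mem_ofPred_eq, not_exists]
      rw [WithTop.eq_top_iff_forall_gt]
      exact forall_congr' fun i => not_le
    calc ENNReal.ofReal β = ENNReal.ofReal β * μ (⋃ n : ℕ, {ω | T ω ≤ n}) := by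
          rw [hfin, mul_one]
      _ = ⨆ n : ℕ, ENNReal.ofReal β * μ {ω | T ω ≤ n} := by
          rw [hmono.measure_iUnion, ENNReal.mul_iSup]
      _ ≤ ∫⁻ ω, ENat.toENNReal (T ω) ∂μ := iSup_le hbound
  · have hmeas : AEMeasurable (fun ω => ENat.toENNReal (T ω)) μ :=
      ((measurable_of_countable fun t : WithTop ℕ => ENat.toENNReal t).comp
        hT.measurable').aemeasurable
    have hinf : ∫⁻ ω, ENat.toENNReal (T ω) ∂μ = ⊤ :=
      lintegral_eq_top_of_measure_eq_top_ne_zero hmeas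
        (by rwa [show {ω | ENat.toENNReal (T ω) = ⊤} = {ω | T ω = ⊤} from
          Set.ext fun ω => ENat.toENNReal_eq_top])
    exact hinf ▸ le_top

end Detection

section ShiryaevRoberts

variable {Ω : Type*} {m : MeasurableSpace Ω} {μ : Measure Ω} {F : Filtration ℕ m}
  {M : ℕ → ℕ → Ω → ℝ}

def shiryaevRoberts (M : ℕ → ℕ → Ω → ℝ) (n : ℕ) : Ω → ℝ := ∑ k ∈ Finset.Icc 1 n, M k n

lemma shiryaevRoberts_zero : shiryaevRoberts M 0 = 0 := by simp [shiryaevRoberts]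

lemma shiryaevRoberts_succ (n : ℕ) :
    shiryaevRoberts M (n + 1) = ∑ k ∈ Finset.Icc 1 n, M k (n + 1) + M (n + 1) (n + 1) :=
  Finset.sum_Icc_succ_top (by omega) _

lemma le_shiryaevRoberts (hnn : ∀ k n ω, 0 ≤ M k n ω) {k n : ℕ} (hk : k ∈ Finset.Icc 1 n)
    (ω : Ω) : M k n ω ≤ shiryaevRoberts M n ω := by
  simpa [shiryaevRoberts] using Finset.single_le_sum (fun j _ => hnn j n ω) hk

lemma shiryaevRoberts_nonneg (hnn : ∀ k n ω, 0 ≤ M k n ω) (n : ℕ) (ω : Ω) :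
    0 ≤ shiryaevRoberts M n ω := by
  simpa [shiryaevRoberts] using Finset.sum_nonneg fun k _ => hnn k n ω

lemma integrable_shiryaevRoberts (hint : ∀ k n, Integrable (M k n) μ) (n : ℕ) :
    Integrable (shiryaevRoberts M n) μ :=
  integrable_finsetSum' _ fun k _ => hint k n

lemma condExp_shiryaevRoberts_succ_le [IsFiniteMeasure μ] (hinit : ∀ k, ∀ᵐ ω ∂μ, M k k ω ≤ 1)
    (hint : ∀ k n, Integrable (M k n) μ)
    (hstep : ∀ k n, k ≤ n → μ[M k (n + 1) | F n] ≤ᵐ[μ] M k n) (n : ℕ) :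
    μ[shiryaevRoberts M (n + 1) | F n] ≤ᵐ[μ] shiryaevRoberts M n + 1 := by
  have hadd := condExp_add (integrable_finsetSum' (Finset.Icc 1 n) fun k _ => hint k (n + 1))
    (hint (n + 1) (n + 1)) (F n)
  have hsum := condExp_finsetSum (fun k _ => hint k (n + 1)) (F n) (s := Finset.Icc 1 n)
  have hold : ∀ᵐ ω ∂μ, ∀ k ∈ Finset.Icc 1 n, μ[M k (n + 1) | F n] ω ≤ M k n ω :=
    (Filter.eventually_all_finset _).mpr fun k hk => hstep k n (Finset.mem_Icc.mp hk).2
  have hnew : μ[M (n + 1) (n + 1) | F n] ≤ᵐ[μ] 1 := by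
    have := condExp_mono (m := F n) (hint (n + 1) (n + 1)) (integrable_const (1 : ℝ))
      (hinit (n + 1))
    rwa [condExp_const (F.le n)] at this
  rw [shiryaevRoberts_succ]
  filter_upwards [hadd, hsum, hold, hnew] with ω h1 h2 h3 h4
  rw [h1, Pi.add_apply, h2, Finset.sum_apply, Pi.add_apply, shiryaevRoberts, Finset.sum_apply]
  exact add_le_add (Finset.sum_le_sum h3) h4

lemma supermartingale_shiryaevRoberts_sub [IsFiniteMeasure μ] (hadapt : ∀ k, Adapted F (M k))
    (hinit : ∀ k, ∀ᵐ ω ∂μ, M k k ω ≤ 1) (hint : ∀ k n, Integrable (M k n) μ)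
    (hstep : ∀ k n, k ≤ n → μ[M k (n + 1) | F n] ≤ᵐ[μ] M k n) :
    Supermartingale (fun n ω => shiryaevRoberts M n ω - n) F μ := by
  refine supermartingale_nat (fun n => ?_) (fun n => ?_) (fun n => ?_)
  · exact (Finset.stronglyMeasurable_sum _ fun k _ => (hadapt k n).stronglyMeasurable).sub
      stronglyMeasurable_const
  · exact (integrable_shiryaevRoberts hint n).sub (integrable_const _)
  · have hsub : μ[fun ω => shiryaevRoberts M (n + 1) ω - ((n + 1 : ℕ) : ℝ) | F n]
        =ᵐ[μ] μ[shiryaevRoberts M (n + 1) | F n] - fun _ => ((n + 1 : ℕ) : ℝ) := by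
      rw [← condExp_const (μ := μ) (F.le n) ((n + 1 : ℕ) : ℝ)]
      exact condExp_sub (integrable_shiryaevRoberts hint _) (integrable_const _) _
    filter_upwards [hsub, condExp_shiryaevRoberts_succ_le hinit hint hstep n] with ω h1 h2
    rw [h1]
    simp only [Pi.sub_apply, Pi.add_apply, Pi.one_apply, Nat.cast_succ] at h2 ⊢
    linarith

end ShiryaevRoberts

/-- Average-run-length control for the e-detector: if each process
`(M k n)_{n ≥ k}` is a nonnegative supermartingale (from time `k`) under the
no-change measure, with `M k k ≤ 1` a.s., and `τ` is the first time `n ≥ 1` at which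
`max_{1 ≤ k ≤ n} M k n ≥ 1/α`, then `E_∞[τ] ≥ 1/α`. -/
theorem stmt_7 {Ω : Type*} {m : MeasurableSpace Ω} (μ : Measure Ω) [IsProbabilityMeasure μ]
    (F : Filtration ℕ m) (M : ℕ → ℕ → Ω → ℝ)
    (hadapt : ∀ k, Adapted F (M k))
    (hnn : ∀ k n ω, 0 ≤ M k n ω)
    (hinit : ∀ k, ∀ᵐ ω ∂μ, M k k ω ≤ 1)
    (hint : ∀ k n, Integrable (M k n) μ)
    (hsupermart : ∀ k i j, k ≤ i → i ≤ j → μ[M k j | F i] ≤ᵐ[μ] M k i)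
    (α : ℝ) (hα : α ∈ Set.Ioo (0 : ℝ) 1)
    (τ : Ω → ℝ≥0∞)
    (hτ : ∀ ω, τ ω = sInf {t : ℝ≥0∞ |
      ∃ n : ℕ, t = n ∧ 1 ≤ n ∧ ∃ k, 1 ≤ k ∧ k ≤ n ∧ 1 / α ≤ M k n ω}) :
    1 / ENNReal.ofReal α ≤ ∫⁻ ω, τ ω ∂μ := by
  have hR := supermartingale_shiryaevRoberts_sub hadapt hinit hint
    fun k n hkn => hsupermart k n (n + 1) hkn n.le_succ
  have hστ : ∀ ω,
      ENat.toENNReal (hittingAfter (shiryaevRoberts M) (Set.Ici (1 / α)) 0 ω) ≤ τ ω := by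
    intro ω
    rw [hτ ω]
    refine le_sInf ?_
    rintro _ ⟨n, rfl, -, k, hk1, hkn, hk⟩
    rw [← ENat.toENNReal_coe]
    exact ENat.toENNReal_le.mpr <| hittingAfter_le_of_mem n.zero_le <|
      hk.trans (le_shiryaevRoberts hnn (Finset.mem_Icc.mpr ⟨hk1, hkn⟩) ω)
  calc 1 / ENNReal.ofReal α = ENNReal.ofReal (1 / α) := by
        rw [one_div, one_div, ENNReal.ofReal_inv_of_pos hα.1]
    _ ≤ ∫⁻ ω, ENat.toENNReal (hittingAfter (shiryaevRoberts M) (Set.Ici (1 / α)) 0 ω) ∂μ :=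
        ofReal_le_lintegral_hittingAfter hR (congrFun shiryaevRoberts_zero)
          (shiryaevRoberts_nonneg hnn) _
    _ ≤ ∫⁻ ω, τ ω ∂μ := lintegral_mono hστ
end

section
/- Let (Y_i)_{i=1}^n be real numbers with |Y_i| ≤ 1 and suppose (1/n)·Σ_{i=1}^n Y_i ≤ -Δ/2 for some Δ ∈ (0,1]. Define W_n = ∫_{-1}^0 ∏_{i=1}^n (1 + λ·Y_i) dλ. Then (log W_n)/n ≥ Δ²/16 − (2·log n)/n. -/
open Real Finset

/-! Each factor `1 + λ Y i` of the integrand `f λ` is affine in `λ` and nonnegative on `[-1, 0]`,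
so on the segment from either endpoint to a point `a` we have `f ≥ c ^ n f a`, `c` the relative
position; integrating gives the mixture regret bound `W ≥ f a / (n + 1)`. By
`log (1 + x) ≥ x - x²` for `x ≥ -1/2`, `log f a ≥ a S - n a²` (`S = ∑ Y i`), which at `a = S / (2n)`
equals `S² / (4n) ≥ n Δ² / 16`. For `n ≥ 2`, `log (n + 1) ≤ 2 log n` finishes the proof;
for `n = 1` the integral is `1 - Y 1 / 2` and is estimated directly. -/

namespace MixtureWealth

variable {ι : Type*} {s : Finset ι} {Y : ι → ℝ}

lemma sub_sq_le_log_one_add {x : ℝ} (hx : -(1 / 2) ≤ x) : x - x ^ 2 ≤ log (1 + x) := by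
  have hpos : 0 < 1 + x := by linarith
  rcases le_total 0 x with hx0 | hx0
  · calc x - x ^ 2 ≤ x / (1 + x) := by
          rw [le_div_iff₀ hpos]
          nlinarith [pow_nonneg hx0 3]
      _ = 1 - (1 + x)⁻¹ := by field_simp; ring
      _ ≤ log (1 + x) := one_sub_inv_le_log_of_pos hpos
  · rw [le_log_iff_exp_le hpos, show x - x ^ 2 = -(x ^ 2 - x) by ring, exp_neg,
      inv_le_iff_one_le_mul₀ (exp_pos _)]
    have hquad := quadratic_le_exp_of_nonneg (show 0 ≤ x ^ 2 - x by nlinarith)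
    nlinarith [mul_le_mul_of_nonneg_left hquad hpos.le]

lemma one_add_mul_nonneg {l y : ℝ} (hl : |l| ≤ 1) (hy : |y| ≤ 1) : 0 ≤ 1 + l * y := by
  have : |l * y| ≤ 1 := abs_mul l y ▸ mul_le_one₀ hl (abs_nonneg y) hy
  linarith [neg_abs_le (l * y)]

lemma pow_mul_prod_le_prod_segment {a b c : ℝ} (ha : |a| ≤ 1) (hb : |b| ≤ 1)
    (hc : c ∈ Set.Icc (0 : ℝ) 1) (hY : ∀ i ∈ s, |Y i| ≤ 1) :
    c ^ #s * ∏ i ∈ s, (1 + a * Y i) ≤ ∏ i ∈ s, (1 + (c * a + (1 - c) * b) * Y i) := by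
  rw [← prod_const, ← prod_mul_distrib]
  refine prod_le_prod (fun i hi => mul_nonneg hc.1 (one_add_mul_nonneg ha (hY i hi)))
    fun i hi => ?_
  -- `1 + (c a + (1 - c) b) y = c (1 + a y) + (1 - c) (1 + b y)`
  have hb' := mul_nonneg (sub_nonneg.2 hc.2) (one_add_mul_nonneg hb (hY i hi))
  linarith

lemma continuous_prod_one_add_mul : Continuous fun l : ℝ => ∏ i ∈ s, (1 + l * Y i) := by
  fun_prop

lemma mul_prod_le_integral_prod_of_right {a b : ℝ} (hab : b ≤ a) (ha : |a| ≤ 1) (hb : |b| ≤ 1)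
    (hY : ∀ i ∈ s, |Y i| ≤ 1) :
    (a - b) / (#s + 1) * ∏ i ∈ s, (1 + a * Y i) ≤ ∫ l in b..a, ∏ i ∈ s, (1 + l * Y i) := by
  set f : ℝ → ℝ := fun l => ∏ i ∈ s, (1 + l * Y i)
  have hf : Continuous f := continuous_prod_one_add_mul
  have hsubst : ∫ l in b..a, f l = (a - b) * ∫ c in (0 : ℝ)..1, f ((a - b) * c + b) := by
    simp
  have hmono : ∫ c in (0 : ℝ)..1, c ^ #s * f a ≤ ∫ c in (0 : ℝ)..1, f ((a - b) * c + b) :=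
    intervalIntegral.integral_mono_on zero_le_one
      (((continuous_pow _).mul continuous_const).intervalIntegrable _ _)
      ((hf.comp (by fun_prop : Continuous fun c : ℝ => (a - b) * c + b)).intervalIntegrable _ _)
      fun c hc => by
        convert pow_mul_prod_le_prod_segment ha hb hc hY using 3
        ring
  have hpow : ∫ c in (0 : ℝ)..1, c ^ #s * f a = f a / (#s + 1) := by
    simp [intervalIntegral.integral_mul_const, integral_pow, div_eq_inv_mul]
  rw [hsubst, div_mul_eq_mul_div, mul_div_assoc, ← hpow]
  exact mul_le_mul_of_nonneg_left hmono (sub_nonneg.2 hab)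

lemma mul_prod_le_integral_prod_of_left {a b : ℝ} (hab : b ≤ a) (ha : |a| ≤ 1) (hb : |b| ≤ 1)
    (hY : ∀ i ∈ s, |Y i| ≤ 1) :
    (a - b) / (#s + 1) * ∏ i ∈ s, (1 + b * Y i) ≤ ∫ l in b..a, ∏ i ∈ s, (1 + l * Y i) := by
  have h := mul_prod_le_integral_prod_of_right (Y := fun i => -Y i) (neg_le_neg hab)
    (abs_neg b ▸ hb) (abs_neg a ▸ ha) (by simpa using hY)
  rw [← intervalIntegral.integral_comp_neg] at h
  simpa [neg_add_eq_sub] using h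

lemma prod_div_le_integral_prod {a : ℝ} (ha : a ∈ Set.Icc (-1 : ℝ) 0) (hY : ∀ i ∈ s, |Y i| ≤ 1) :
    (∏ i ∈ s, (1 + a * Y i)) / (#s + 1) ≤ ∫ l in (-1 : ℝ)..0, ∏ i ∈ s, (1 + l * Y i) := by
  have ha' : |a| ≤ 1 := abs_le.2 ⟨ha.1, by linarith [ha.2]⟩
  have hleft := mul_prod_le_integral_prod_of_right ha.1 ha' (by simp) hY
  have hright := mul_prod_le_integral_prod_of_left ha.2 (by simp) ha' hY
  rw [← intervalIntegral.integral_add_adjacent_intervals (b := a)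
    (continuous_prod_one_add_mul.intervalIntegrable _ _)
    (continuous_prod_one_add_mul.intervalIntegrable _ _)]
  have hsplit : (∏ i ∈ s, (1 + a * Y i)) / (#s + 1) =
      (a - -1) / (#s + 1) * ∏ i ∈ s, (1 + a * Y i) + (0 - a) / (#s + 1) * ∏ i ∈ s, (1 + a * Y i) := by
    field_simp
    ring
  linarith

lemma integral_one_add_mul (y : ℝ) : ∫ l in (-1 : ℝ)..0, (1 + l * y) = 1 - y / 2 := by
  simp
  ring

lemma abs_mul_le_half {t y : ℝ} (ht : |t| ≤ 1 / 2) (hy : |y| ≤ 1) : |t * y| ≤ 1 / 2 :=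
  abs_mul t y ▸ (mul_le_of_le_one_right (abs_nonneg t) hy).trans ht

lemma mul_sum_sub_le_log_prod {t : ℝ} (ht : |t| ≤ 1 / 2) (hY : ∀ i ∈ s, |Y i| ≤ 1) :
    t * ∑ i ∈ s, Y i - #s * t ^ 2 ≤ log (∏ i ∈ s, (1 + t * Y i)) := by
  have hsmall : ∀ i ∈ s, |t * Y i| ≤ 1 / 2 := fun i hi => abs_mul_le_half ht (hY i hi)
  rw [log_prod fun i hi => by linarith [neg_abs_le (t * Y i), hsmall i hi], mul_sum,
    ← nsmul_eq_mul, ← sum_const, ← sum_sub_distrib]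
  refine sum_le_sum fun i hi => le_trans ?_ (sub_sq_le_log_one_add ?_)
  · have : (t * Y i) ^ 2 ≤ t ^ 2 := by
      rw [mul_pow, ← sq_abs (Y i)]
      exact mul_le_of_le_one_right (sq_nonneg t) (pow_le_one₀ (abs_nonneg _) (hY i hi))
    linarith
  · linarith [neg_abs_le (t * Y i), hsmall i hi]

lemma sq_div_sub_log_le_log_integral_prod (hs : s.Nonempty) (hY : ∀ i ∈ s, |Y i| ≤ 1)
    (hS : ∑ i ∈ s, Y i ≤ 0) :
    (∑ i ∈ s, Y i) ^ 2 / (4 * #s) - log (#s + 1) ≤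
      log (∫ l in (-1 : ℝ)..0, ∏ i ∈ s, (1 + l * Y i)) := by
  set S := ∑ i ∈ s, Y i
  have hn : (0 : ℝ) < #s := by exact_mod_cast hs.card_pos
  have hSn : -(#s : ℝ) ≤ S := by
    simpa using card_nsmul_le_sum s Y (-1) fun i hi => (abs_le.1 (hY i hi)).1
  -- the maximiser of the quadratic lower bound `t S - #s t²`
  set t := S / (2 * #s)
  have ht : t ∈ Set.Icc (-(1 / 2) : ℝ) 0 := by
    constructor
    · rw [le_div_iff₀ (by positivity)]; linarith
    · exact div_nonpos_of_nonpos_of_nonneg hS (by positivity)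
  have ht' : |t| ≤ 1 / 2 := abs_le.2 ⟨ht.1, by linarith [ht.2]⟩
  have hprod : 0 < ∏ i ∈ s, (1 + t * Y i) := prod_pos fun i hi => by
    linarith [neg_abs_le (t * Y i), abs_mul_le_half ht' (hY i hi)]
  calc S ^ 2 / (4 * #s) - log (#s + 1) = t * S - #s * t ^ 2 - log (#s + 1) := by
        simp only [t]; field_simp; ring
    _ ≤ log (∏ i ∈ s, (1 + t * Y i)) - log (#s + 1) := by
        gcongr
        exact mul_sum_sub_le_log_prod ht' hY
    _ = log ((∏ i ∈ s, (1 + t * Y i)) / (#s + 1)) := (log_div hprod.ne' (by positivity)).symm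
    _ ≤ _ := log_le_log (by positivity)
        (prod_div_le_integral_prod ⟨by linarith [ht.1], ht.2⟩ hY)

lemma card_mul_sq_div_sub_two_log_le_log_integral_prod {Δ : ℝ} (hs : 2 ≤ #s) (hΔ : 0 < Δ)
    (hY : ∀ i ∈ s, |Y i| ≤ 1) (hS : ∑ i ∈ s, Y i ≤ -(#s * Δ / 2)) :
    #s * Δ ^ 2 / 16 - 2 * log #s ≤ log (∫ l in (-1 : ℝ)..0, ∏ i ∈ s, (1 + l * Y i)) := by
  have hn : (2 : ℝ) ≤ #s := by exact_mod_cast hs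
  have hbound := sq_div_sub_log_le_log_integral_prod (card_pos.1 (by omega)) hY
    (by nlinarith)
  have hquad : #s * Δ ^ 2 / 16 ≤ (∑ i ∈ s, Y i) ^ 2 / (4 * #s) := by
    have := pow_le_pow_left₀ (by positivity) (le_neg.1 hS) 2
    rw [neg_sq] at this
    rw [le_div_iff₀ (by positivity)]
    nlinarith
  have hlog : log (#s + 1) ≤ 2 * log #s := by
    calc log (#s + 1) ≤ log ((#s : ℝ) ^ 2) := log_le_log (by positivity) (by nlinarith)
      _ = 2 * log #s := by rw [log_pow]; norm_num
  linarith

lemma sq_div_sixteen_le_log_one_sub_half {y Δ : ℝ} (hy : |y| ≤ 1) (hΔ : 0 < Δ)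
    (hyΔ : y ≤ -Δ / 2) : Δ ^ 2 / 16 ≤ log (1 - y / 2) := by
  have hy' := abs_le.1 hy
  have hlog := sub_sq_le_log_one_add (x := -y / 2) (by linarith)
  rw [sub_eq_add_neg, ← neg_div]
  nlinarith

end MixtureWealth

open MixtureWealth

/-- If `|Y i| ≤ 1` and the average `(1/n)Σ Y_i ≤ -Δ/2` for some
`Δ ∈ (0,1]`, then the mixture wealth `W_n = ∫_{-1}^0 ∏ (1 + λ Y_i) dλ` satisfies
`(log W_n)/n ≥ Δ²/16 - 2 log n / n`. -/
theorem stmt_9 (n : ℕ) (Y : ℕ → ℝ) (hY : ∀ i, |Y i| ≤ 1)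
    (Δ : ℝ) (hΔ : Δ ∈ Set.Ioc (0 : ℝ) 1)
    (havg : (1 / (n : ℝ)) * ∑ i ∈ Finset.Icc 1 n, Y i ≤ -Δ / 2)
    (W : ℝ) (hW : W = ∫ l in (-1 : ℝ)..0, ∏ i ∈ Finset.Icc 1 n, (1 + l * Y i)) :
    Δ ^ 2 / 16 - 2 * Real.log n / n ≤ Real.log W / n := by
  subst hW
  obtain ⟨hΔ0, -⟩ := hΔ
  rcases Nat.lt_or_ge n 2 with hn | hn
  · interval_cases n
    · -- the average is `1 / 0 * 0 = 0`
      simp at havg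
      linarith
    · simp only [Nat.cast_one, div_one, one_mul, Icc_self, sum_singleton, prod_singleton,
        log_one, mul_zero, sub_zero] at havg ⊢
      rw [integral_one_add_mul]
      exact sq_div_sixteen_le_log_one_sub_half (hY 1) hΔ0 havg
  · have hnpos : (0 : ℝ) < n := by exact_mod_cast (by omega : 0 < n)
    have hcard : #(Icc 1 n) = n := by simp
    have hS : ∑ i ∈ Icc 1 n, Y i ≤ -(#(Icc 1 n) * Δ / 2) := by
      rw [one_div, inv_mul_le_iff₀ hnpos] at havg
      rw [hcard]
      linarith
    have hbound := card_mul_sq_div_sub_two_log_le_log_integral_prod (by rwa [hcard]) hΔ0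
      (fun i _ => hY i) hS
    rw [hcard] at hbound
    rw [sub_le_iff_le_add, ← add_div, le_div_iff₀ hnpos]
    linarith
end

section
/- Let τ be a stopping time with P(τ < ∞) = 1, let θ be a fixed label, and suppose: (a) P(ĵ_n ≠ θ) ≤ C₁·e^{-c·n} for all n ≥ 1 and constants C₁, c > 0; (b) the stopping rule is τ = inf{n ≥ 1 : W_n ≥ 1/α} where W_n ≥ 0 and E[W_n] ≤ C₂·2^n for all n. Then for any integer K ≥ 1, P(ĵ_τ ≠ θ) ≤ Σ_{n≥K} C₁·e^{-c·n} + α·Σ_{n=1}^{K-1} C₂·2^n. In particular, choosing K of order log₂(1/√α), the right-hand side tends to 0 as α → 0, so P(ĵ_τ = θ) → 1 as α → 0. -/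
/-!
Split on whether the stopping time `τ` reaches `K`. If `τ ≥ K`, then `ĵ_τ ≠ θ` forces
`ĵ_n ≠ θ` for some `n ≥ K`, an event of probability at most the tail `∑_{n ≥ K} C₁ e^{-cn}`.
If `τ < K`, the wealth crossed `1/α` at some time `m < K`, and by Markov's inequality each such
crossing has probability at most `α E[W_m] ≤ α C₂ 2^m`. Letting `α → 0` first kills the finite
sum for fixed `K`, and then `K → ∞` kills the tail.
-/

open MeasureTheory Filter Topology

namespace StoppedIdentification

variable {Ω : Type*} [MeasurableSpace Ω] (μ : Measure Ω)

theorem measure_mem_stopped_le {B E : ℕ → Set Ω} {τ : Ω → ℕ}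
    (hτ : ∀ ω, 1 ≤ τ ω ∧ ω ∈ E (τ ω)) (K : ℕ) :
    μ {ω | ω ∈ B (τ ω)} ≤ ∑' n, μ (B (n + K)) + ∑ m ∈ Finset.Ico 1 K, μ (E m) := by
  have hsub : {ω | ω ∈ B (τ ω)} ⊆ (⋃ n, B (n + K)) ∪ ⋃ m ∈ Finset.Ico 1 K, E m := by
    intro ω hω
    obtain ⟨hτ_pos, hτ_mem⟩ := hτ ω
    by_cases hK : K ≤ τ ω
    · exact Or.inl (Set.mem_iUnion.2 ⟨τ ω - K, by rwa [Nat.sub_add_cancel hK]⟩)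
    · exact Or.inr (Set.mem_biUnion (Finset.mem_Ico.2 ⟨hτ_pos, not_le.1 hK⟩) hτ_mem)
  calc μ {ω | ω ∈ B (τ ω)} ≤ μ ((⋃ n, B (n + K)) ∪ ⋃ m ∈ Finset.Ico 1 K, E m) :=
        measure_mono hsub
    _ ≤ _ := (measure_union_le _ _).trans
        (add_le_add (measure_iUnion_le _) (measure_biUnion_finset_le _ _))

theorem measure_one_div_le_le_ofReal_mul_integral [IsFiniteMeasure μ] {f : Ω → ℝ}
    (hf : 0 ≤ᵐ[μ] f) (hfi : Integrable f μ) {α : ℝ} (hα : 0 < α) :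
    μ {ω | 1 / α ≤ f ω} ≤ ENNReal.ofReal (α * ∫ ω, f ω ∂μ) := by
  rw [ENNReal.le_ofReal_iff_toReal_le (measure_ne_top _ _)
    (mul_nonneg hα.le (integral_nonneg_of_ae hf))]
  have hmarkov := mul_meas_ge_le_integral_of_nonneg hf hfi (1 / α)
  rwa [measureReal_def, one_div, inv_mul_le_iff₀ hα, ← one_div] at hmarkov

theorem measure_mem_stopped_le_ofReal [IsFiniteMeasure μ] {B : ℕ → Set Ω} {a b : ℕ → ℝ}
    (ha : Summable a) (ha_nonneg : ∀ n, 0 ≤ a n) (hb_nonneg : ∀ n, 0 ≤ b n)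
    (hB : ∀ n, 1 ≤ n → μ (B n) ≤ ENNReal.ofReal (a n))
    {W : ℕ → Ω → ℝ} (hW_nonneg : ∀ n ω, 0 ≤ W n ω) (hW_int : ∀ n, Integrable (W n) μ)
    (hW_le : ∀ n, ∫ ω, W n ω ∂μ ≤ b n) {α : ℝ} (hα : 0 < α) {τ : Ω → ℕ}
    (hτ : ∀ ω, 1 ≤ τ ω ∧ 1 / α ≤ W (τ ω) ω) {K : ℕ} (hK : 1 ≤ K) :
    μ {ω | ω ∈ B (τ ω)} ≤
      ENNReal.ofReal (∑' n, a (n + K) + α * ∑ n ∈ Finset.Ico 1 K, b n) := by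
  have hcross : ∀ m, μ {ω | 1 / α ≤ W m ω} ≤ ENNReal.ofReal (α * b m) := fun m =>
    (measure_one_div_le_le_ofReal_mul_integral μ (ae_of_all _ (hW_nonneg m)) (hW_int m) hα).trans
      (ENNReal.ofReal_le_ofReal (mul_le_mul_of_nonneg_left (hW_le m) hα.le))
  calc μ {ω | ω ∈ B (τ ω)}
      ≤ ∑' n, μ (B (n + K)) + ∑ m ∈ Finset.Ico 1 K, μ {ω | 1 / α ≤ W m ω} :=
        measure_mem_stopped_le μ (E := fun m => {ω | 1 / α ≤ W m ω}) hτ K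
    _ ≤ ∑' n, ENNReal.ofReal (a (n + K)) + ∑ m ∈ Finset.Ico 1 K, ENNReal.ofReal (α * b m) :=
        add_le_add (ENNReal.tsum_le_tsum fun n => hB _ (by omega))
          (Finset.sum_le_sum fun m _ => hcross m)
    _ = _ := by
        rw [ENNReal.ofReal_add (tsum_nonneg fun n => ha_nonneg _)
            (mul_nonneg hα.le (Finset.sum_nonneg fun n _ => hb_nonneg n)),
          ENNReal.ofReal_tsum_of_nonneg (fun n => ha_nonneg _) ((summable_nat_add_iff K).2 ha),
          Finset.mul_sum, ENNReal.ofReal_sum_of_nonneg fun m _ => mul_nonneg hα.le (hb_nonneg m)]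

theorem tendsto_nhdsGT_zero_of_le_ofReal_add_mul {p : ℝ → ENNReal} {T S : ℕ → ℝ}
    (hT : Tendsto T atTop (𝓝 0))
    (hp : ∀ α ∈ Set.Ioo (0 : ℝ) 1, ∀ K, 1 ≤ K → p α ≤ ENNReal.ofReal (T K + α * S K)) :
    Tendsto p (𝓝[>] 0) (𝓝 0) := by
  rw [ENNReal.tendsto_nhds_zero]
  intro ε hε
  obtain ⟨K, hKε, hK⟩ := (((ENNReal.tendsto_ofReal hT).eventually_lt_const
    (by rwa [ENNReal.ofReal_zero])).and (eventually_ge_atTop 1)).exists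
  have hlim : Tendsto (fun α => ENNReal.ofReal (T K + α * S K)) (𝓝[>] 0)
      (𝓝 (ENNReal.ofReal (T K))) := by
    refine ENNReal.tendsto_ofReal (tendsto_nhdsWithin_of_tendsto_nhds ?_)
    simpa using ((continuous_id.mul continuous_const).const_add (T K)).tendsto (0 : ℝ)
  filter_upwards [hlim.eventually_lt_const hKε, Ioo_mem_nhdsGT one_pos] with α hα hα_mem
  exact (hp α hα_mem K hK).trans hα.le

theorem tendsto_measure_one_of_tendsto_measure_compl [IsProbabilityMeasure μ] {ι : Type*}
    {l : Filter ι} {s : ι → Set Ω} (h : Tendsto (fun i => μ (s i)ᶜ) l (𝓝 0)) :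
    Tendsto (fun i => μ (s i)) l (𝓝 1) := by
  have hlower : Tendsto (fun i => 1 - μ (s i)ᶜ) l (𝓝 1) := by
    simpa using ENNReal.Tendsto.sub tendsto_const_nhds h (Or.inl ENNReal.one_ne_top)
  refine tendsto_of_tendsto_of_tendsto_of_le_of_le hlower tendsto_const_nhds (fun i => ?_)
    fun i => prob_le_one
  rw [tsub_le_iff_right, ← measure_univ (μ := μ)]
  exact measure_univ_le_add_compl _

end StoppedIdentification

open StoppedIdentification

/-- Identification at stopping. Given (a) exponential misidentification
bounds `P(ĵ n ≠ θ) ≤ C₁ e^{-c n}`, and (b) a nonnegative wealth process with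
`E[W n] ≤ C₂ 2ⁿ` whose level-`α` stopping time `τ α` is the first `n ≥ 1` with
`W n ≥ 1/α` (a.s. finite, modeled as `ℕ`-valued), then for every `K ≥ 1`,
`P(ĵ_{τ} ≠ θ) ≤ Σ_{n ≥ K} C₁ e^{-c n} + α·Σ_{n=1}^{K-1} C₂ 2ⁿ`; consequently
`P(ĵ_{τ α} = θ) → 1` as `α → 0⁺`. -/
theorem stmt_18 {Ω : Type*} [MeasurableSpace Ω] (μ : Measure Ω) [IsProbabilityMeasure μ]
    (L : ℕ) (θ : Fin (L + 1)) (jhat : ℕ → Ω → Fin (L + 1))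
    (C₁ c C₂ : ℝ) (hC₁ : 0 < C₁) (hc : 0 < c) (hC₂ : 0 < C₂)
    (hmis : ∀ n : ℕ, 1 ≤ n →
      μ {ω | jhat n ω ≠ θ} ≤ ENNReal.ofReal (C₁ * Real.exp (-c * n)))
    (W : ℕ → Ω → ℝ) (hWnn : ∀ n ω, 0 ≤ W n ω)
    (hWint : ∀ n, Integrable (W n) μ)
    (hWgrowth : ∀ n : ℕ, ∫ ω, W n ω ∂μ ≤ C₂ * 2 ^ n)
    (τ : ℝ → Ω → ℕ)
    (hτ : ∀ α ∈ Set.Ioo (0 : ℝ) 1, ∀ ω,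
      1 ≤ τ α ω ∧ 1 / α ≤ W (τ α ω) ω ∧ ∀ m, 1 ≤ m → m < τ α ω → W m ω < 1 / α) :
    (∀ α ∈ Set.Ioo (0 : ℝ) 1, ∀ K : ℕ, 1 ≤ K →
      μ {ω | jhat (τ α ω) ω ≠ θ}
        ≤ ENNReal.ofReal ((∑' n : ℕ, C₁ * Real.exp (-c * (n + K))) +
            α * ∑ n ∈ Finset.Ico 1 K, C₂ * 2 ^ n)) ∧
    Tendsto (fun α : ℝ => μ {ω | jhat (τ α ω) ω = θ})
      (nhdsWithin 0 (Set.Ioi 0)) (nhds 1) := by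
  set a : ℕ → ℝ := fun n => C₁ * Real.exp (-c * n) with ha_def
  have ha : Summable a := ((Real.summable_exp_nat_mul_iff.2 (neg_neg_of_pos hc)).mul_left C₁).congr
    fun n => by rw [mul_comm (n : ℝ)]
  have htail : ∀ K : ℕ, ∑' n : ℕ, C₁ * Real.exp (-c * (n + K)) = ∑' n, a (n + K) := fun K => by
    simp only [ha_def, Nat.cast_add]
  have hbound : ∀ α ∈ Set.Ioo (0 : ℝ) 1, ∀ K : ℕ, 1 ≤ K →
      μ {ω | jhat (τ α ω) ω ≠ θ} ≤ ENNReal.ofReal ((∑' n : ℕ, C₁ * Real.exp (-c * (n + K))) +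
        α * ∑ n ∈ Finset.Ico 1 K, C₂ * 2 ^ n) := by
    intro α hα K hK
    rw [htail]
    exact measure_mem_stopped_le_ofReal μ (B := fun n => {ω | jhat n ω ≠ θ}) ha
      (fun n => by positivity) (fun n => by positivity) hmis hWnn hWint hWgrowth hα.1
      (fun ω => ⟨(hτ α hα ω).1, (hτ α hα ω).2.1⟩) hK
  refine ⟨hbound, tendsto_measure_one_of_tendsto_measure_compl μ ?_⟩
  exact tendsto_nhdsGT_zero_of_le_ofReal_add_mul
    ((tendsto_sum_nat_add a).congr fun K => (htail K).symm) hbound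
end
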